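/- arXiv:2306.11289 — 3 statements merged into one kernel-verified Lean document; each statement's English description precedes it below -/
import Mathlib

section
/- For every integer n ≥ 1 and every real t ≥ 0, the n-th Touchard polynomial satisfies T_n(t) ≤ (t + (n−1)/2)^n. -/
open Finset

/-- Stirling numbers of the second kind, via the standard recurrence
`S(n+1,k+1) = (k+1) S(n,k+1) + S(n,k)`; `S(n,k)` counts the partitions of an
`n`-element set into `k` nonempty blocks. -/
def stirling2 : ℕ → ℕ → ℕ
  | 0, 0 => 1
  | 0, _ + 1 => 0
  | _ + 1, 0 => 0
  | n + 1, k + 1 => (k + 1) * stirling2 n (k + 1) + stirling2 n k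

/-- The `n`-th Touchard polynomial `T_n(t) = ∑_{k=0}^n S(n,k) t^k`. -/
noncomputable def touchard (n : ℕ) (t : ℝ) : ℝ :=
  ∑ k ∈ Finset.range (n + 1), (stirling2 n k : ℝ) * t ^ k

lemma stirling2_of_lt : ∀ {n k : ℕ}, n < k → stirling2 n k = 0
  | 0, _ + 1, _ => rfl
  | n + 1, k + 1, h => by
    have h1 : n < k + 1 := Nat.lt_of_succ_lt h
    have h2 : n < k := Nat.lt_of_succ_lt_succ h
    simp [stirling2, stirling2_of_lt h1, stirling2_of_lt h2]

lemma stirling2_self : ∀ n : ℕ, stirling2 n n = 1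
  | 0 => rfl
  | n + 1 => by
    simp [stirling2, stirling2_of_lt (Nat.lt_succ_self n), stirling2_self n]

/-- Key numeric inequality: `(n-m)(n+2m+1)(n-1)^m ≤ (n+1)n^(m+1)` for `m ≤ n`. -/
lemma keyA (n : ℕ) : ∀ m : ℕ, m ≤ n →
    ((n : ℝ) - m) * ((n : ℝ) + 2 * m + 1) * ((n : ℝ) - 1) ^ m
      ≤ ((n : ℝ) + 1) * (n : ℝ) ^ (m + 1)
  | 0, _ => by push_cast; nlinarith [Nat.cast_nonneg (α := ℝ) n]
  | m + 1, h => by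
    push_cast
    have hm : m ≤ n := Nat.le_of_succ_le h
    have hn1 : (m : ℝ) + 1 ≤ n := by exact_mod_cast h
    have hm0 : (0 : ℝ) ≤ m := Nat.cast_nonneg m
    have hP : (0 : ℝ) ≤ ((n : ℝ) - 1) ^ m := by
      apply pow_nonneg; linarith
    have ih := keyA n m hm
    have step : ((n : ℝ) - 1) * (((n : ℝ) - ((m : ℝ) + 1)) * ((n : ℝ) + 2 * ((m : ℝ) + 1) + 1))
        ≤ (n : ℝ) * (((n : ℝ) - m) * ((n : ℝ) + 2 * m + 1)) := by
      nlinarith [mul_nonneg hm0 (sub_nonneg.2 hn1), sq_nonneg ((m : ℝ) - 1)]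
    calc ((n : ℝ) - ((m : ℝ) + 1)) * ((n : ℝ) + 2 * ((m : ℝ) + 1) + 1) * ((n : ℝ) - 1) ^ (m + 1)
        = (((n : ℝ) - 1) * (((n : ℝ) - ((m : ℝ) + 1)) * ((n : ℝ) + 2 * ((m : ℝ) + 1) + 1)))
            * ((n : ℝ) - 1) ^ m := by ring
      _ ≤ ((n : ℝ) * (((n : ℝ) - m) * ((n : ℝ) + 2 * m + 1))) * ((n : ℝ) - 1) ^ m :=
          mul_le_mul_of_nonneg_right step hP
      _ = (n : ℝ) * (((n : ℝ) - m) * ((n : ℝ) + 2 * m + 1) * ((n : ℝ) - 1) ^ m) := by ring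
      _ ≤ (n : ℝ) * (((n : ℝ) + 1) * (n : ℝ) ^ (m + 1)) :=
          mul_le_mul_of_nonneg_left ih (Nat.cast_nonneg n)
      _ = ((n : ℝ) + 1) * (n : ℝ) ^ (m + 1 + 1) := by ring

/-- Coefficient bound: `S(n,k) * 2^(n-k) ≤ C(n,k) * (n-1)^(n-k)` for `k ≤ n`. -/
lemma keyB : ∀ n k : ℕ, k ≤ n →
    (stirling2 n k : ℝ) * 2 ^ (n - k) ≤ (n.choose k : ℝ) * ((n : ℝ) - 1) ^ (n - k)
  | 0, 0, _ => by norm_num [stirling2]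
  | n + 1, 0, _ => by
    have h0 : stirling2 (n + 1) 0 = 0 := rfl
    rw [h0]
    have : (0:ℝ) ≤ ((n + 1 : ℕ) : ℝ) * (((n + 1 : ℕ) : ℝ) - 1) ^ (n + 1 - 0) := by
      have : (0:ℝ) ≤ (((n + 1 : ℕ) : ℝ) - 1) := by push_cast; linarith [Nat.cast_nonneg (α := ℝ) n]
      positivity
    simpa using this
  | n + 1, k + 1, h => by
    have hk : k ≤ n := Nat.lt_succ_iff.mp h
    rcases eq_or_lt_of_le hk with rfl | hlt
    · -- k = n : both sides equal 1
      simp [stirling2, stirling2_self, stirling2_of_lt (Nat.lt_succ_self k)]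
    · -- k + 1 ≤ n
      have hk1 : k + 1 ≤ n := hlt
      have hmn : n - (k + 1) ≤ n := Nat.sub_le _ _
      obtain ⟨m, hmdef⟩ : ∃ m, n - (k + 1) = m := ⟨_, rfl⟩
      have hmk : (m : ℝ) = (n : ℝ) - (k : ℝ) - 1 := by
        rw [← hmdef, Nat.cast_sub hk1]; push_cast; ring
      have hsub1 : n + 1 - (k + 1) = m + 1 := by omega
      have hsub3 : n - k = m + 1 := by omega
      have ih1 := keyB n (k + 1) hk1
      have ih2 := keyB n k hk
      rw [hmdef] at ih1
      rw [hsub3] at ih2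
      rw [hsub1]
      have hrec : (stirling2 (n + 1) (k + 1) : ℝ)
          = ((k : ℝ) + 1) * (stirling2 n (k + 1) : ℝ) + (stirling2 n k : ℝ) := by
        show ((((k + 1) * stirling2 n (k + 1) + stirling2 n k : ℕ)) : ℝ) = _
        push_cast; ring
      have hchoose : (((n + 1).choose (k + 1)) : ℝ)
          = ((n.choose (k + 1)) : ℝ) + ((n.choose k) : ℝ) := by
        rw [Nat.choose_succ_succ]; push_cast; ring
      set c1 : ℝ := ((n.choose (k + 1)) : ℝ) with hc1
      set c2 : ℝ := ((n.choose k) : ℝ) with hc2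
      have hc1nn : 0 ≤ c1 := Nat.cast_nonneg _
      have hrel : ((k : ℝ) + 1) * c1 = ((m : ℝ) + 1) * c2 := by
        have hcn := Nat.choose_succ_right_eq n k
        rw [hsub3] at hcn
        have : c1 * ((k : ℝ) + 1) = c2 * ((m : ℝ) + 1) := by
          rw [hc1, hc2]; exact_mod_cast congrArg (Nat.cast (R := ℝ)) hcn
        linarith
      set P : ℝ := ((n : ℝ) - 1) ^ m with hPdef
      set Q : ℝ := (n : ℝ) ^ (m + 1) with hQdef
      have hn1 : (1:ℝ) ≤ (n : ℝ) := by
        exact_mod_cast Nat.one_le_iff_ne_zero.mpr (by omega)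
      have hPnn : 0 ≤ P := by apply pow_nonneg; linarith
      have hA := keyA n m (by omega)
      rw [← hPdef, ← hQdef] at hA
      have hkm : ((n : ℝ) - m) = (k : ℝ) + 1 := by rw [hmk]; ring
      rw [hkm] at hA
      have key : c1 * (((k : ℝ) + 1) * ((n : ℝ) + 2 * (m : ℝ) + 1) * P)
          ≤ c1 * (((n : ℝ) + 1) * Q) := mul_le_mul_of_nonneg_left hA hc1nn
      have hbQ : (((n + 1 : ℕ) : ℝ) - 1) ^ (m + 1) = Q := by
        rw [hQdef]; push_cast; norm_num
      rw [hrec, hchoose, hbQ]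
      have e1 : (((k : ℝ) + 1) * (stirling2 n (k + 1) : ℝ) + (stirling2 n k : ℝ)) * 2 ^ (m + 1)
          = ((k : ℝ) + 1) * 2 * ((stirling2 n (k + 1) : ℝ) * 2 ^ m)
            + (stirling2 n k : ℝ) * 2 ^ (m + 1) := by ring
      rw [e1]
      have hk2 : (0:ℝ) ≤ ((k : ℝ) + 1) * 2 := by positivity
      have b1 : ((k : ℝ) + 1) * 2 * ((stirling2 n (k + 1) : ℝ) * 2 ^ m)
          ≤ ((k : ℝ) + 1) * 2 * (c1 * P) := mul_le_mul_of_nonneg_left ih1 hk2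
      have b2 : (stirling2 n k : ℝ) * 2 ^ (m + 1) ≤ c2 * ((n : ℝ) - 1) ^ (m + 1) := ih2
      have b3 : ((k : ℝ) + 1) * 2 * (c1 * P) + c2 * ((n : ℝ) - 1) ^ (m + 1) ≤ (c1 + c2) * Q := by
        have hm1pos : (0:ℝ) < (m : ℝ) + 1 := by positivity
        rw [← mul_le_mul_iff_right₀ hm1pos]
        have e2 : ((n : ℝ) - 1) ^ (m + 1) = ((n : ℝ) - 1) * P := by rw [hPdef]; ring
        rw [e2]
        have h3 : ((k : ℝ) + 1) * c1 * Q = ((m : ℝ) + 1) * c2 * Q := by rw [hrel]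
        have h2' : ((k : ℝ) + 1) * c1 * (((n : ℝ) - 1) * P)
            = ((m : ℝ) + 1) * c2 * (((n : ℝ) - 1) * P) := by rw [hrel]
        have h4 : ((m : ℝ) + (k : ℝ) + 2) * (c1 * Q) = ((n : ℝ) + 1) * (c1 * Q) := by
          rw [hmk]; ring
        linarith [key, h2', h3, h4]
      linarith

/-- Inequality (5.7): `T_n(t) ≤ (t + (n-1)/2)^n` for `n ≥ 1` and `t ≥ 0`. -/
theorem touchard_le (n : ℕ) (hn : 1 ≤ n) (t : ℝ) (ht : 0 ≤ t) :
    touchard n t ≤ (t + ((n : ℝ) - 1) / 2) ^ n := by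
  rw [touchard, add_pow]
  apply Finset.sum_le_sum
  intro k hk
  have hkn : k ≤ n := Nat.lt_succ_iff.mp (Finset.mem_range.mp hk)
  have hB := keyB n k hkn
  have h2 : (0:ℝ) < 2 ^ (n - k) := by positivity
  have hS : (stirling2 n k : ℝ) ≤ (n.choose k : ℝ) * (((n : ℝ) - 1) / 2) ^ (n - k) := by
    rw [div_pow, ← mul_div_assoc, le_div_iff₀ h2]
    exact hB
  calc (stirling2 n k : ℝ) * t ^ k
      ≤ ((n.choose k : ℝ) * (((n : ℝ) - 1) / 2) ^ (n - k)) * t ^ k :=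
        mul_le_mul_of_nonneg_right hS (pow_nonneg ht k)
    _ = t ^ k * (((n : ℝ) - 1) / 2) ^ (n - k) * (n.choose k : ℝ) := by ring
end

section
/- Let α: ℕ → ℝ≥0 be multiplicative with ∑_{ν≥0} α(p^ν)/p^{σ0ν} convergent and positive for every prime p, where σ0 > 0, and let f: ℕ → ℝ be strongly additive with |f(p)| ≤ 1 for all primes p. Define F(σ0,p) := 1 − (∑_{ν≥0} α(p^ν)/p^{σ0ν})^{−1}, extend F multiplicatively to squarefree arguments by F(σ0,a) := ∏_{p|a} F(σ0,p), set f_p(n) := f(p)(1−F(σ0,p)) if p|n and −f(p)F(σ0,p) otherwise, f_q(n) := ∏_{p^ν ∥ q} f_p(n)^ν, and G(σ0,q) := ∑_{ab | R_q} f_q(a)μ(b)F(σ0,ab). Then: (1) G(σ0, q1q2) = G(σ0,q1)·G(σ0,q2) whenever gcd(q1,q2) = 1; and (2) for every prime power p^ν, G(σ0,p^ν) = f(p)^ν·F(σ0,p)(1−F(σ0,p))·((−1)^ν F(σ0,p)^{ν−1} + (1−F(σ0,p))^{ν−1}); in particular G(σ0,p) = 0 and |G(σ0,p^ν)| ≤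 1/4. -/
open Finset Real

noncomputable section

def IsMultiplicativeFn (α : ℕ → ℝ) : Prop :=
  α 1 = 1 ∧ ∀ m n : ℕ, Nat.Coprime m n → α (m * n) = α m * α n

def IsStronglyAdditive (f : ℕ → ℝ) : Prop :=
  (∀ m n : ℕ, Nat.Coprime m n → f (m * n) = f m + f n) ∧
  ∀ p ν : ℕ, Nat.Prime p → 1 ≤ ν → f (p ^ ν) = f p

/-- The radical (squarefree kernel) of `q`. -/
def rad (q : ℕ) : ℕ := ∏ p ∈ q.primeFactors, p

/-- `F(σ0,p) = 1 - (∑_{ν ≥ 0} α(p^ν)/p^{σ0 ν})⁻¹`. -/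
def Fp (α : ℕ → ℝ) (σ0 : ℝ) (p : ℕ) : ℝ :=
  1 - (∑' ν : ℕ, α (p ^ ν) / (p : ℝ) ^ (σ0 * (ν : ℝ)))⁻¹

/-- The multiplicative extension of `F(σ0,·)` to squarefree arguments. -/
def Fmult (α : ℕ → ℝ) (σ0 : ℝ) (a : ℕ) : ℝ := ∏ p ∈ a.primeFactors, Fp α σ0 p

/-- `f_p(n)`. -/
def fpFun (α : ℕ → ℝ) (σ0 : ℝ) (f : ℕ → ℝ) (p n : ℕ) : ℝ :=
  if p ∣ n then f p * (1 - Fp α σ0 p) else -(f p * Fp α σ0 p)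

/-- `f_q(n) = ∏_{p^ν ∥ q} f_p(n)^ν`. -/
def fqFun (α : ℕ → ℝ) (σ0 : ℝ) (f : ℕ → ℝ) (q n : ℕ) : ℝ :=
  ∏ p ∈ q.primeFactors, fpFun α σ0 f p n ^ (q.factorization p)

/-- `G(σ0,q) = ∑_{ab ∣ R_q} f_q(a) μ(b) F(σ0,ab)`. -/
def Gfun (α : ℕ → ℝ) (σ0 : ℝ) (f : ℕ → ℝ) (q : ℕ) : ℝ :=
  ∑ a ∈ (rad q).divisors, ∑ b ∈ (rad q / a).divisors,
    fqFun α σ0 f q a * ((ArithmeticFunction.moebius b : ℤ) : ℝ) * Fmult α σ0 (a * b)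

lemma aux_sf : ∀ {s : Finset ℕ}, (∀ p ∈ s, p.Prime) → Squarefree (∏ p ∈ s, p) := by
  intro s
  induction s using Finset.induction_on with
  | empty => intro _; simpa using squarefree_one
  | @insert p s hp ih =>
    intro hs
    rw [Finset.prod_insert hp]
    have hpp := hs p (Finset.mem_insert_self p s)
    have hrest : ∀ q ∈ s, q.Prime := fun q hq => hs q (Finset.mem_insert_of_mem hq)
    have hcop : Nat.Coprime p (∏ q ∈ s, q) :=
      Nat.Coprime.prod_right fun q hq =>
        (Nat.coprime_primes hpp (hrest q hq)).mpr (by rintro rfl; exact hp hq)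
    exact (Nat.squarefree_mul hcop).mpr ⟨hpp.squarefree, ih hrest⟩

lemma sum_divisors_prod_primes {s : Finset ℕ} (hs : ∀ p ∈ s, p.Prime) (g : ℕ → ℝ) :
    ∑ d ∈ (∏ p ∈ s, p).divisors, g d = ∑ t ∈ s.powerset, g (∏ p ∈ t, p) := by
  have hsf := aux_sf hs
  have hne : (∏ p ∈ s, p) ≠ 0 := hsf.ne_zero
  refine Finset.sum_nbij' (fun d => d.primeFactors) (fun t => ∏ p ∈ t, p) ?_ ?_ ?_ ?_ ?_
  · intro d hd
    rw [Finset.mem_powerset]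
    have := Nat.primeFactors_mono (Nat.dvd_of_mem_divisors hd) hne
    rwa [Nat.primeFactors_prod hs] at this
  · intro t ht
    rw [Finset.mem_powerset] at ht
    exact Nat.mem_divisors.mpr ⟨Finset.prod_dvd_prod_of_subset _ _ _ ht, hne⟩
  · intro d hd
    exact Nat.prod_primeFactors_of_squarefree
      (hsf.squarefree_of_dvd (Nat.dvd_of_mem_divisors hd))
  · intro t ht
    rw [Finset.mem_powerset] at ht
    exact Nat.primeFactors_prod fun p hp => hs p (ht hp)
  · intro d hd
    rw [Nat.prod_primeFactors_of_squarefree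
      (hsf.squarefree_of_dvd (Nat.dvd_of_mem_divisors hd))]

lemma Gfun_eq_prod (α : ℕ → ℝ) (σ0 : ℝ) (f : ℕ → ℝ) (q : ℕ) :
    Gfun α σ0 f q = ∏ p ∈ q.primeFactors,
      ((f p * (1 - Fp α σ0 p)) ^ q.factorization p * Fp α σ0 p +
       (-(f p * Fp α σ0 p)) ^ q.factorization p * (1 - Fp α σ0 p)) := by
  classical
  set P := q.primeFactors with hPdef
  set F := fun p => Fp α σ0 p with hFdef
  have hPprime : ∀ p ∈ P, p.Prime := fun p hp => Nat.prime_of_mem_primeFactors hp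
  have hsf : Squarefree (∏ p ∈ P, p) := aux_sf hPprime
  have hradP : (∏ p ∈ P, p).primeFactors = P := Nat.primeFactors_prod hPprime
  have hrad : rad q = ∏ p ∈ P, p := rfl
  rw [Gfun, hrad, sum_divisors_prod_primes hPprime]
  have hstep : ∀ S ∈ P.powerset,
      (∑ b ∈ ((∏ p ∈ P, p) / ∏ p ∈ S, p).divisors,
        fqFun α σ0 f q (∏ p ∈ S, p) * ((ArithmeticFunction.moebius b : ℤ) : ℝ) *
          Fmult α σ0 ((∏ p ∈ S, p) * b)) =
      (∏ p ∈ S, ((f p * (1 - F p)) ^ q.factorization p * F p)) *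
        ∏ p ∈ P \ S, ((-(f p * F p)) ^ q.factorization p * (1 - F p)) := by
    intro S hS
    rw [Finset.mem_powerset] at hS
    have hS' : S ⊆ (∏ p ∈ P, p).primeFactors := by rwa [hradP]
    have hdiv : (∏ p ∈ P, p) / (∏ p ∈ S, p) = ∏ p ∈ P \ S, p := by
      have := Nat.prod_primeFactors_sdiff_of_squarefree hsf hS'
      rw [hradP] at this
      exact this.symm
    rw [hdiv, sum_divisors_prod_primes (fun p hp => hPprime p (Finset.mem_sdiff.mp hp).1)]
    -- compute fqFun at ∏ S
    have hfq : fqFun α σ0 f q (∏ p ∈ S, p) =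
        (∏ p ∈ P \ S, (-(f p * F p)) ^ q.factorization p) *
        ∏ p ∈ S, (f p * (1 - F p)) ^ q.factorization p := by
      rw [fqFun, ← hPdef, ← Finset.prod_sdiff hS]
      congr 1
      · refine Finset.prod_congr rfl fun p hp => ?_
        have hpP := (Finset.mem_sdiff.mp hp).1
        have hpS := (Finset.mem_sdiff.mp hp).2
        have hnd : ¬ p ∣ ∏ p' ∈ S, p' := by
          intro hdvd
          obtain ⟨p', hp', hpp'⟩ :=
            (Nat.Prime.prime (hPprime p hpP)).exists_mem_finset_dvd hdvd
          exact hpS (((Nat.prime_dvd_prime_iff_eq (hPprime p hpP)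
            (hPprime p' (hS hp'))).mp hpp') ▸ hp')
        rw [fpFun, if_neg hnd]

      · refine Finset.prod_congr rfl fun p hp => ?_
        have hdvd : p ∣ ∏ p' ∈ S, p' := Finset.dvd_prod_of_mem _ hp
        rw [fpFun, if_pos hdvd]
    have hterm : ∀ T ∈ (P \ S).powerset,
        fqFun α σ0 f q (∏ p ∈ S, p) * ((ArithmeticFunction.moebius (∏ p ∈ T, p) : ℤ) : ℝ) *
          Fmult α σ0 ((∏ p ∈ S, p) * ∏ p ∈ T, p) =
        ((∏ p ∈ S, ((f p * (1 - F p)) ^ q.factorization p * F p)) *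
          ∏ p ∈ P \ S, (-(f p * F p)) ^ q.factorization p) * ∏ p ∈ T, (-(F p)) := by
      intro T hT
      rw [Finset.mem_powerset] at hT
      have hTprime : ∀ p ∈ T, p.Prime := fun p hp =>
        hPprime p (Finset.mem_sdiff.mp (hT hp)).1
      have hdisj : Disjoint S T := Finset.disjoint_left.mpr fun p hpS hpT =>
        (Finset.mem_sdiff.mp (hT hpT)).2 hpS
      -- moebius
      have hmu : ((ArithmeticFunction.moebius (∏ p ∈ T, p) : ℤ) : ℝ) =
          ∏ p ∈ T, (-1 : ℝ) := by
        rw [ArithmeticFunction.IsMultiplicative.map_prod_of_prime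
          ArithmeticFunction.isMultiplicative_moebius T hTprime]
        push_cast
        exact Finset.prod_congr rfl fun p hp => by
          rw [ArithmeticFunction.moebius_apply_prime (hTprime p hp)]; norm_num
      -- Fmult
      have hFm : Fmult α σ0 ((∏ p ∈ S, p) * ∏ p ∈ T, p) =
          (∏ p ∈ S, F p) * ∏ p ∈ T, F p := by
        rw [Fmult, ← Finset.prod_union hdisj,
          Nat.primeFactors_prod (fun p hp => by
            rcases Finset.mem_union.mp hp with h | h
            exacts [hPprime p (hS h), hTprime p h]),
          Finset.prod_union hdisj]
      have hTmul : (∏ p ∈ T, (-1 : ℝ)) * ∏ p ∈ T, F p = ∏ p ∈ T, (-(F p)) := by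
        rw [← Finset.prod_mul_distrib]
        exact Finset.prod_congr rfl fun p _ => by ring
      rw [hfq, hmu, hFm, Finset.prod_mul_distrib, ← hTmul]
      ring
    rw [Finset.sum_congr rfl hterm, ← Finset.mul_sum]
    have hsum : ∑ T ∈ (P \ S).powerset, ∏ p ∈ T, (-(F p)) =
        ∏ p ∈ P \ S, (1 - F p) := by
      have := Finset.prod_add (fun p => -(F p)) (fun _ => (1 : ℝ)) (P \ S)
      simp only [Finset.prod_const_one, mul_one] at this
      rw [← this]
      exact Finset.prod_congr rfl fun p _ => by ring
    rw [hsum, Finset.prod_mul_distrib (s := P \ S)]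
    ring
  rw [Finset.sum_congr rfl hstep, ← Finset.prod_add]
/-- Section 5: `G(σ0,·)` is multiplicative, with explicit values at prime
powers; in particular `G(σ0,p) = 0` and `|G(σ0,p^ν)| ≤ 1/4`. -/
theorem Gfun_multiplicative_and_prime_power
    (α : ℕ → ℝ) (σ0 : ℝ) (hσ0 : 0 < σ0)
    (hαnonneg : ∀ n, 0 ≤ α n) (hαmult : IsMultiplicativeFn α)
    (hsumm : ∀ p : ℕ, Nat.Prime p →
      Summable (fun ν : ℕ => α (p ^ ν) / (p : ℝ) ^ (σ0 * (ν : ℝ))))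
    (hpos : ∀ p : ℕ, Nat.Prime p →
      0 < ∑' ν : ℕ, α (p ^ ν) / (p : ℝ) ^ (σ0 * (ν : ℝ)))
    (f : ℕ → ℝ) (hf : IsStronglyAdditive f)
    (hfbd : ∀ p : ℕ, Nat.Prime p → |f p| ≤ 1) :
    (∀ q1 q2 : ℕ, 0 < q1 → 0 < q2 → Nat.Coprime q1 q2 →
      Gfun α σ0 f (q1 * q2) = Gfun α σ0 f q1 * Gfun α σ0 f q2) ∧
    (∀ p ν : ℕ, Nat.Prime p → 1 ≤ ν →
      Gfun α σ0 f (p ^ ν) =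
        f p ^ ν * (Fp α σ0 p * (1 - Fp α σ0 p)) *
          ((-1 : ℝ) ^ ν * Fp α σ0 p ^ (ν - 1) + (1 - Fp α σ0 p) ^ (ν - 1))) ∧
    (∀ p : ℕ, Nat.Prime p → Gfun α σ0 f p = 0) ∧
    (∀ p ν : ℕ, Nat.Prime p → 1 ≤ ν → |Gfun α σ0 f (p ^ ν)| ≤ 1 / 4) := by
  have part1 : ∀ q1 q2 : ℕ, 0 < q1 → 0 < q2 → Nat.Coprime q1 q2 →
      Gfun α σ0 f (q1 * q2) = Gfun α σ0 f q1 * Gfun α σ0 f q2 := by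
    intro q1 q2 h1 h2 hcop
    have hdisj := Nat.Coprime.disjoint_primeFactors hcop
    rw [Gfun_eq_prod, Gfun_eq_prod, Gfun_eq_prod,
      Nat.primeFactors_mul h1.ne' h2.ne', Finset.prod_union hdisj]
    congr 1
    · refine Finset.prod_congr rfl fun p hp => ?_
      have hp2 : p ∉ q2.primeFactors := Finset.disjoint_left.mp hdisj hp
      have h0 : q2.factorization p = 0 := by
        rwa [← Finsupp.notMem_support_iff, Nat.support_factorization]
      rw [Nat.factorization_mul h1.ne' h2.ne', Finsupp.add_apply, h0, add_zero]
    · refine Finset.prod_congr rfl fun p hp => ?_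
      have hp1 : p ∉ q1.primeFactors := Finset.disjoint_right.mp hdisj hp
      have h0 : q1.factorization p = 0 := by
        rwa [← Finsupp.notMem_support_iff, Nat.support_factorization]
      rw [Nat.factorization_mul h1.ne' h2.ne', Finsupp.add_apply, h0, zero_add]
  have part2 : ∀ p ν : ℕ, Nat.Prime p → 1 ≤ ν →
      Gfun α σ0 f (p ^ ν) =
        f p ^ ν * (Fp α σ0 p * (1 - Fp α σ0 p)) *
          ((-1 : ℝ) ^ ν * Fp α σ0 p ^ (ν - 1) + (1 - Fp α σ0 p) ^ (ν - 1)) := by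
    intro p ν hp hν
    rw [Gfun_eq_prod]
    have h1 : (p ^ ν).primeFactors = {p} :=
      Nat.primeFactors_prime_pow (by omega) hp
    have h2 : (p ^ ν).factorization p = ν := by
      rw [hp.factorization_pow, Finsupp.single_eq_same]
    rw [h1, Finset.prod_singleton, h2]
    obtain ⟨k, rfl⟩ : ∃ k, ν = k + 1 := ⟨ν - 1, by omega⟩
    simp only [Nat.add_sub_cancel]
    rw [neg_pow (f p * Fp α σ0 p), mul_pow (f p) (Fp α σ0 p),
      mul_pow (f p) (1 - Fp α σ0 p)]
    ring
  have part3 : ∀ p : ℕ, Nat.Prime p → Gfun α σ0 f p = 0 := by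
    intro p hp
    have h := part2 p 1 hp le_rfl
    rw [pow_one] at h
    rw [h]
    norm_num
  refine ⟨part1, part2, part3, ?_⟩
  intro p ν hp hν
  -- basic bounds on Fp
  have hS := hpos p hp
  have hS1 : (1 : ℝ) ≤ ∑' ν : ℕ, α (p ^ ν) / (p : ℝ) ^ (σ0 * (ν : ℝ)) := by
    have h0 : α (p ^ 0) / (p : ℝ) ^ (σ0 * ((0 : ℕ) : ℝ)) = 1 := by
      rw [pow_zero, hαmult.1]
      norm_num
    calc (1 : ℝ) = α (p ^ 0) / (p : ℝ) ^ (σ0 * ((0 : ℕ) : ℝ)) := h0.symm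
      _ ≤ _ := Summable.le_tsum (hsumm p hp) 0 fun i _ =>
          div_nonneg (hαnonneg _) (Real.rpow_nonneg (Nat.cast_nonneg p) _)
  have hFeq : Fp α σ0 p = 1 - (∑' ν : ℕ, α (p ^ ν) / (p : ℝ) ^ (σ0 * (ν : ℝ)))⁻¹ := rfl
  set x := Fp α σ0 p with hxdef
  have hx0 : 0 ≤ x := by
    have : (∑' ν : ℕ, α (p ^ ν) / (p : ℝ) ^ (σ0 * (ν : ℝ)))⁻¹ ≤ 1 := by
      rw [inv_le_one_iff₀]; right; exact hS1
    rw [hFeq]; linarith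
  have hx1 : x < 1 := by
    have : 0 < (∑' ν : ℕ, α (p ^ ν) / (p : ℝ) ^ (σ0 * (ν : ℝ)))⁻¹ := inv_pos.mpr hS
    rw [hFeq]; linarith
  obtain ⟨k, rfl⟩ : ∃ k, ν = k + 1 := ⟨ν - 1, by omega⟩
  rcases Nat.eq_zero_or_pos k with hk | hk
  · subst hk
    rw [pow_one, part3 p hp]
    norm_num
  · rw [part2 p (k + 1) hp (by omega)]
    simp only [Nat.add_sub_cancel]
    have h1x0 : 0 ≤ 1 - x := by linarith
    have hb1 : |f p ^ (k + 1)| ≤ 1 := by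
      rw [abs_pow]; exact pow_le_one₀ (abs_nonneg _) (hfbd p hp)
    have hb2 : |(-1 : ℝ) ^ (k + 1) * x ^ k + (1 - x) ^ k| ≤ x ^ k + (1 - x) ^ k := by
      refine (abs_add_le _ _).trans ?_
      rw [abs_mul, abs_pow, abs_neg, abs_one, one_pow, one_mul,
        abs_of_nonneg (pow_nonneg hx0 k), abs_of_nonneg (pow_nonneg h1x0 k)]
    have hxk : x ^ k ≤ x := pow_le_of_le_one hx0 hx1.le (by omega)
    have h1xk : (1 - x) ^ k ≤ 1 - x := pow_le_of_le_one h1x0 (by linarith) (by omega)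
    have hmid : 0 ≤ x * (1 - x) := mul_nonneg hx0 h1x0
    have hb3 : x ^ k + (1 - x) ^ k ≤ 1 := by linarith
    calc |f p ^ (k + 1) * (x * (1 - x)) *
          ((-1 : ℝ) ^ (k + 1) * x ^ k + (1 - x) ^ k)|
        = |f p ^ (k + 1)| * (x * (1 - x)) *
          |(-1 : ℝ) ^ (k + 1) * x ^ k + (1 - x) ^ k| := by
          rw [abs_mul, abs_mul, abs_of_nonneg hmid]
      _ ≤ 1 * (x * (1 - x)) * (x ^ k + (1 - x) ^ k) := by
          refine mul_le_mul (mul_le_mul_of_nonneg_right hb1 hmid) hb2 (abs_nonneg _) ?_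
          linarith
      _ ≤ 1 * (x * (1 - x)) * 1 := by
          refine mul_le_mul_of_nonneg_left hb3 (by linarith)
      _ ≤ 1 / 4 := by nlinarith [sq_nonneg (x - 1 / 2)]


end
end

section
/- There exists an infinite set P of prime numbers, all ≥ 17, such that ∑_{p ∈ P, p ≤ x} 1/p = (log log x)/(log log log x) + o(1) as x → ∞. -/
open Finset Filter Real

namespace Rem22
open Asymptotics
noncomputable section


/-- primes in `(n, 2n]` -/
def K (n : ℕ) : Finset ℕ := (Finset.Ioc n (2*n)).filter Nat.Prime

lemma centralBinom_le (n : ℕ) (h : 2 < n) :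
    Nat.centralBinom n ≤ (2*n) ^ (Nat.sqrt (2*n)) * 4 ^ (2*n/3) * ∏ p ∈ K n, p := by
  have n_pos : 0 < n := by omega
  have n2_pos : 1 ≤ 2 * n := by omega
  set f : ℕ → ℕ := fun x => x ^ (Nat.centralBinom n).factorization x with hf
  have h1 : Nat.centralBinom n = ∏ x ∈ Finset.range (2*n+1), f x :=
    (Nat.prod_pow_factorization_centralBinom n).symm
  have hdisj : Disjoint (Finset.range (2*n/3+1)) (Finset.Ioc n (2*n)) := by
    rw [Finset.disjoint_left]; intro a ha hb
    simp only [Finset.mem_range] at ha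
    simp only [Finset.mem_Ioc] at hb
    omega
  have hsub : Finset.range (2*n/3+1) ∪ Finset.Ioc n (2*n) ⊆ Finset.range (2*n+1) := by
    intro a ha
    simp only [Finset.mem_union, Finset.mem_range, Finset.mem_Ioc] at ha ⊢
    omega
  have h2 : ∏ x ∈ Finset.range (2*n+1), f x
      = (∏ x ∈ Finset.range (2*n/3+1), f x) * ∏ x ∈ Finset.Ioc n (2*n), f x := by
    rw [← Finset.prod_union hdisj]
    refine (Finset.prod_subset hsub ?_).symm
    intro x hx hx'
    simp only [Finset.mem_union, Finset.mem_range, Finset.mem_Ioc, not_or, not_and, not_lt] at hx hx'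
    by_cases hp : x.Prime
    · have hx3 : 2*n < 3*x := by omega
      have hxn : x ≤ n := by omega
      simp [f, Nat.factorization_centralBinom_of_two_mul_self_lt_three_mul h hxn hx3]
    · simp [f, Nat.factorization_eq_zero_of_not_prime _ hp]
  have hA : ∏ x ∈ Finset.range (2*n/3+1), f x ≤ (2*n) ^ (Nat.sqrt (2*n)) * 4 ^ (2*n/3) := by
    let S := (Finset.range (2 * n / 3 + 1)).filter Nat.Prime
    have hS : ∏ x ∈ S, f x = ∏ x ∈ Finset.range (2 * n / 3 + 1), f x := by
      refine Finset.prod_filter_of_ne fun p _ hne => ?_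
      contrapose! hne
      simp [f, Nat.factorization_eq_zero_of_not_prime _ hne]
    rw [← hS, ← Finset.prod_filter_mul_prod_filter_not S (· ≤ Nat.sqrt (2 * n))]
    apply Nat.mul_le_mul
    · refine (Finset.prod_le_prod' fun p _ => (?_ : f p ≤ 2 * n)).trans ?_
      · exact Nat.pow_factorization_choose_le (by omega)
      have hcard : (Finset.Icc 1 (Nat.sqrt (2 * n))).card = Nat.sqrt (2 * n) := by
        rw [Nat.card_Icc, Nat.add_sub_cancel]
      rw [Finset.prod_const]
      refine pow_le_pow_right₀ n2_pos ((Finset.card_le_card fun x hx => ?_).trans hcard.le)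
      obtain ⟨h1', h2'⟩ := Finset.mem_filter.1 hx
      exact Finset.mem_Icc.mpr ⟨(Finset.mem_filter.1 h1').2.one_lt.le, h2'⟩
    · refine le_trans ?_ (primorial_le_4_pow (2 * n / 3))
      refine (Finset.prod_le_prod' fun p hp => (?_ : f p ≤ p)).trans ?_
      · obtain ⟨h1', h2'⟩ := Finset.mem_filter.1 hp
        refine (Nat.pow_le_pow_right (Finset.mem_filter.1 h1').2.one_lt.le ?_).trans (pow_one p).le
        exact Nat.factorization_choose_le_one (Nat.sqrt_lt'.mp <| not_le.1 h2')
      refine Finset.prod_le_prod_of_subset_of_one_le' (Finset.filter_subset _ _) ?_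
      exact fun p hp _ => (Finset.mem_filter.1 hp).2.one_lt.le
  have hB : ∏ x ∈ Finset.Ioc n (2*n), f x ≤ ∏ p ∈ K n, p := by
    have : ∏ x ∈ K n, f x = ∏ x ∈ Finset.Ioc n (2*n), f x := by
      refine Finset.prod_filter_of_ne fun p _ hne => ?_
      contrapose! hne
      simp [f, Nat.factorization_eq_zero_of_not_prime _ hne]
    rw [← this]
    refine Finset.prod_le_prod' fun p hp => ?_
    obtain ⟨h1', h2'⟩ := Finset.mem_filter.1 hp
    have hpn : n < p := (Finset.mem_Ioc.1 h1').1
    have : 2 * n < p ^ 2 := by nlinarith [Finset.mem_Ioc.1 h1' |>.1]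
    refine (Nat.pow_le_pow_right h2'.one_lt.le ?_).trans (pow_one p).le
    exact Nat.factorization_choose_le_one this
  calc Nat.centralBinom n = _ := h1
    _ = _ := h2
    _ ≤ _ := Nat.mul_le_mul hA hB

lemma four_pow_le (n : ℕ) (h : 4 ≤ n) :
    (4:ℕ) ^ n ≤ n * ((2*n) ^ (Nat.sqrt (2*n)) * 4 ^ (2*n/3) * (2*n) ^ (K n).card) := by
  have h1 := Nat.four_pow_lt_mul_centralBinom n h
  have h2 := centralBinom_le n (by omega)
  have h3 : ∏ p ∈ K n, p ≤ (2*n) ^ (K n).card := by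
    rw [← Finset.prod_const]
    refine Finset.prod_le_prod' fun p hp => ?_
    exact (Finset.mem_Ioc.1 (Finset.mem_filter.1 hp).1).2
  calc (4:ℕ)^n ≤ n * Nat.centralBinom n := h1.le
    _ ≤ _ := by
        refine Nat.mul_le_mul_left n (h2.trans ?_)
        exact Nat.mul_le_mul_left _ h3




lemma littleo : (fun x : ℝ => Real.log x + Real.sqrt (2*x) * Real.log (2*x))
    =o[atTop] (fun x : ℝ => x) := by
  have h1 : Real.log =o[atTop] (fun x : ℝ => x) := Real.isLittleO_log_id_atTop
  have hsq : (fun y : ℝ => Real.sqrt y * Real.log y) =o[atTop] (fun y : ℝ => y) := by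
    have h2 : Real.log =o[atTop] (fun y : ℝ => y ^ ((1:ℝ)/2)) :=
      isLittleO_log_rpow_atTop (by norm_num)
    have h3 : (fun y : ℝ => Real.sqrt y * Real.log y)
        =o[atTop] (fun y : ℝ => Real.sqrt y * y ^ ((1:ℝ)/2)) :=
      (isBigO_refl (fun y : ℝ => Real.sqrt y) atTop).mul_isLittleO h2
    refine h3.trans_isBigO (Filter.EventuallyEq.isBigO ?_)
    filter_upwards [eventually_ge_atTop (0:ℝ)] with y hy
    rw [← Real.sqrt_eq_rpow, Real.mul_self_sqrt hy]
  have h4 : (fun x : ℝ => Real.sqrt (2*x) * Real.log (2*x)) =o[atTop] (fun x : ℝ => 2*x) := by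
    exact hsq.comp_tendsto (tendsto_id.const_mul_atTop two_pos)
  have h5 : (fun x : ℝ => 2*x) =O[atTop] (fun x : ℝ => x) := by
    apply isBigO_const_mul_self
  exact h1.add (h4.trans_isBigO h5)

lemma card_K : ∀ᶠ n : ℕ in atTop, (n:ℝ)/3 ≤ (K n).card * Real.log (2*n) := by
  have key : ∀ᶠ x : ℝ in atTop,
      Real.log x + Real.sqrt (2*x) * Real.log (2*x) ≤ (Real.log 4 - 1)/3 * x := by
    have := littleo.bound (c := (Real.log 4 - 1)/3) (by
      have : (1.3862:ℝ) ≤ Real.log 4 := by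
        rw [show (4:ℝ) = 2^2 by norm_num, Real.log_pow]
        nlinarith [Real.log_two_gt_d9]
      linarith)
    filter_upwards [this, eventually_ge_atTop (1:ℝ)] with x hx hx1
    calc Real.log x + Real.sqrt (2*x) * Real.log (2*x)
        ≤ |Real.log x + Real.sqrt (2*x) * Real.log (2*x)| := le_abs_self _
      _ ≤ (Real.log 4 - 1)/3 * |x| := by simpa [Real.norm_eq_abs] using hx
      _ = (Real.log 4 - 1)/3 * x := by rw [abs_of_nonneg (by linarith)]
  have keyN : ∀ᶠ n : ℕ in atTop,
      Real.log n + Real.sqrt (2*(n:ℝ)) * Real.log (2*n) ≤ (Real.log 4 - 1)/3 * n :=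
    tendsto_natCast_atTop_atTop.eventually key
  filter_upwards [keyN, eventually_ge_atTop 4] with n hn hn4
  have hn0 : (0:ℝ) < n := by positivity
  have h2n : (1:ℝ) ≤ 2*(n:ℝ) := by
    have : (1:ℝ) ≤ (n:ℝ) := by exact_mod_cast Nat.one_le_iff_ne_zero.2 (by omega)
    linarith
  have hle := four_pow_le n hn4
  -- cast to ℝ and take logs
  have hle' : (4:ℝ)^n ≤ (n:ℝ) * ((2*(n:ℝ)) ^ (Nat.sqrt (2*n)) * 4 ^ (2*n/3) * (2*(n:ℝ)) ^ (K n).card) := by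
    have := Nat.cast_le (α := ℝ) |>.mpr hle
    push_cast at this
    convert this using 3 <;> push_cast <;> ring_nf
  have hlog := Real.log_le_log (by positivity) hle'
  rw [Real.log_pow] at hlog
  rw [Real.log_mul (by positivity) (by positivity), Real.log_mul (by positivity) (by positivity),
    Real.log_mul (by positivity) (by positivity), Real.log_pow, Real.log_pow, Real.log_pow] at hlog
  -- hlog : n * log 4 ≤ log n + (sqrt-part + 4-part + card-part)
  have e1 : (Nat.sqrt (2*n) : ℝ) * Real.log (2*(n:ℝ)) ≤ Real.sqrt (2*(n:ℝ)) * Real.log (2*(n:ℝ)) := by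
    have := Real.nat_sqrt_le_real_sqrt (a := 2*n)
    have hl : 0 ≤ Real.log (2*(n:ℝ)) := Real.log_nonneg h2n
    push_cast at this ⊢
    exact mul_le_mul_of_nonneg_right this hl
  have e2 : ((2*n/3 : ℕ) : ℝ) * Real.log 4 ≤ (2*(n:ℝ)/3) * Real.log 4 := by
    have h4 : (0:ℝ) ≤ Real.log 4 := Real.log_nonneg (by norm_num)
    have := Nat.cast_div_le (m := 2*n) (n := 3) (α := ℝ)
    push_cast at this
    exact mul_le_mul_of_nonneg_right this h4
  have hlog4 : (1:ℝ) ≤ Real.log 4 := by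
    have h24 : Real.log 4 = 2 * Real.log 2 := by
      rw [show (4:ℝ) = 2^2 by norm_num, Real.log_pow]; norm_num
    have := Real.log_two_gt_d9
    rw [h24]; linarith
  push_cast at hlog
  nlinarith [hn, e1, e2, hlog, hn0.le, hlog4]

lemma sum_K : ∀ᶠ n : ℕ in atTop, 1/(6 * Real.log (2*(n:ℝ))) ≤ ∑ p ∈ K n, (1:ℝ)/p := by
  filter_upwards [card_K, eventually_ge_atTop 4] with n hn hn4
  have hn0 : (0:ℝ) < n := by positivity
  have hlog : (0:ℝ) < Real.log (2*n) := by
    apply Real.log_pos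
    have : (4:ℝ) ≤ (n:ℝ) := by exact_mod_cast hn4
    linarith
  have hsum : ((K n).card : ℝ) * (1/(2*(n:ℝ))) ≤ ∑ p ∈ K n, (1:ℝ)/p := by
    have := Finset.card_nsmul_le_sum (K n) (fun p => (1:ℝ)/p) (1/(2*(n:ℝ))) ?_
    · simpa [nsmul_eq_mul] using this
    · intro p hp
      obtain ⟨hmem, hprime⟩ := Finset.mem_filter.1 hp
      have hp2 : (p:ℝ) ≤ 2*(n:ℝ) := by exact_mod_cast (Finset.mem_Ioc.1 hmem).2
      have hp0 : (0:ℝ) < p := by exact_mod_cast hprime.pos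
      exact one_div_le_one_div_of_le hp0 hp2
  refine le_trans ?_ hsum
  rw [mul_one_div, div_le_div_iff₀ (by positivity) (by positivity)]
  nlinarith [hn, hlog]




lemma harmonic_lower (a : ℕ) : ∀ b : ℕ,
    Real.log (b+1) - Real.log (a+1) ≤ ∑ j ∈ Finset.Ioc a b, (1:ℝ)/j := by
  intro b
  induction b with
  | zero =>
      simp only [Finset.Ioc_eq_empty_of_le (Nat.zero_le a), Finset.sum_empty]
      push_cast
      have : Real.log 1 ≤ Real.log (a+1) := by
        apply Real.log_le_log (by norm_num); push_cast; linarith [Nat.cast_nonneg (α := ℝ) a]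
      simp [Real.log_one] at this ⊢; linarith
  | succ b ih =>
      rcases le_or_gt (b+1) a with hba | hab
      · rw [Finset.Ioc_eq_empty_of_le hba, Finset.sum_empty]
        have : Real.log (b+1+1) ≤ Real.log (a+1) := by
          apply Real.log_le_log (by positivity)
          have : (b:ℝ)+1 ≤ a := by exact_mod_cast hba
          push_cast; linarith
        push_cast at this ⊢; linarith
      · have hba' : a ≤ b := by omega
        rw [Finset.sum_Ioc_succ_top (by omega)]
        have hstep : Real.log (b+1+1) - Real.log (b+1) ≤ 1/((b:ℝ)+1) := by
          have hb0 : (0:ℝ) < (b:ℝ)+1 := by positivity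
          have h1 : Real.log (((b:ℝ)+1+1)/((b:ℝ)+1)) ≤ ((b:ℝ)+1+1)/((b:ℝ)+1) - 1 :=
            Real.log_le_sub_one_of_pos (by positivity)
          rw [Real.log_div (by positivity) (by positivity)] at h1
          have h2 : ((b:ℝ)+1+1)/((b:ℝ)+1) - 1 = 1/((b:ℝ)+1) := by field_simp; ring
          linarith [h1, h2 ▸ h1]
        push_cast
        push_cast at ih hstep
        linarith

lemma dyadic (N₁ : ℕ) (hN₁ : ∀ n, N₁ ≤ n → 1/(6*Real.log (2*(n:ℝ))) ≤ ∑ p ∈ K n, (1:ℝ)/p)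
    (a : ℕ) (ha : N₁ ≤ 2^a) : ∀ b : ℕ, a ≤ b →
    (1/(6*Real.log 2)) * ∑ k ∈ Finset.Ioc a b, (1:ℝ)/k ≤
      ∑ p ∈ Finset.Ioc ((2:ℕ)^a) ((2:ℕ)^b), (if p.Prime then (1:ℝ)/p else 0) := by
  intro b
  induction b with
  | zero => intro hab; interval_cases a; simp
  | succ b ih =>
      intro hab
      rcases Nat.lt_or_ge a (b+1) with hab' | hab'
      · have hab2 : a ≤ b := by omega
        have hpow : (2:ℕ)^a ≤ 2^b := Nat.pow_le_pow_right (by norm_num) hab2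
        have hpow2 : (2:ℕ)^b ≤ 2^(b+1) := Nat.pow_le_pow_right (by norm_num) (by omega)
        rw [← Finset.sum_Ioc_consecutive _ hpow hpow2,
            Finset.sum_Ioc_succ_top hab2]
        have hblock : 1/(6*Real.log 2) * (1/((b:ℝ)+1)) ≤
            ∑ p ∈ Finset.Ioc ((2:ℕ)^b) ((2:ℕ)^(b+1)), (if p.Prime then (1:ℝ)/p else 0) := by
          have h2eq : 2*2^b = 2^(b+1) := by ring
          have hKb : ∑ p ∈ Finset.Ioc ((2:ℕ)^b) ((2:ℕ)^(b+1)), (if p.Prime then (1:ℝ)/p else 0)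
              = ∑ p ∈ K (2^b), (1:ℝ)/p := by
            rw [K, h2eq, Finset.sum_filter]
          rw [hKb]
          refine le_trans ?_ (hN₁ (2^b) (le_trans ha (by exact_mod_cast hpow)))
          have hlogpow : Real.log (2*(2:ℝ)^b) = ((b:ℝ)+1) * Real.log 2 := by
            have h2 : (2:ℝ)*(2:ℝ)^b = 2^(b+1) := by ring
            rw [h2, Real.log_pow]; push_cast; ring
          push_cast
          rw [hlogpow]
          apply le_of_eq
          have hl2 : (0:ℝ) < Real.log 2 := Real.log_pos (by norm_num)
          have hb1 : (0:ℝ) < (b:ℝ)+1 := by positivity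
          field_simp
        have := ih hab2
        rw [mul_add]
        push_cast
        push_cast at hblock this
        linarith
      · have : a = b+1 := by omega
        subst this
        simp

lemma log_nat_ge_four (q : ℕ) (hq : 100 ≤ q) : (4:ℝ) ≤ Real.log q := by
  rw [show (4:ℝ) = Real.log (Real.exp 4) by rw [Real.log_exp]]
  apply Real.log_le_log (Real.exp_pos _)
  have he := Real.exp_one_lt_d9
  have h4 : Real.exp 4 = (Real.exp 1)^4 := by
    rw [← Real.exp_nat_mul]; norm_num
  have h100 : (100:ℝ) ≤ q := by exact_mod_cast hq
  have hsq : Real.exp 1 ^ 2 < 7.39 := by nlinarith [Real.exp_pos 1]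
  have : Real.exp 4 < 55 := by
    rw [h4]
    calc Real.exp 1 ^ 4 = (Real.exp 1 ^ 2)^2 := by ring
      _ < 7.39^2 := by nlinarith [Real.exp_pos 1, pow_pos (Real.exp_pos 1) 2]
      _ < 55 := by norm_num
  linarith

lemma log_log_le_add_one (q : ℕ) (hq : 100 ≤ q) :
    Real.log ((Nat.log 2 q : ℝ) + 2) ≤ Real.log (Real.log q) + 1 := by
  have hq4 : (4:ℝ) ≤ Real.log q := log_nat_ge_four q hq
  have hlog2 : Real.log 2 > 0.6931471803 := Real.log_two_gt_d9
  have hnatlog : (Nat.log 2 q : ℝ) * Real.log 2 ≤ Real.log q := by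
    have h1 : (2:ℕ)^(Nat.log 2 q) ≤ q := Nat.pow_log_le_self 2 (by omega)
    have h2 : ((2:ℕ)^(Nat.log 2 q) : ℝ) ≤ q := by exact_mod_cast h1
    calc (Nat.log 2 q : ℝ) * Real.log 2 = Real.log ((2:ℝ)^(Nat.log 2 q)) := by
          rw [Real.log_pow]
      _ ≤ Real.log q := Real.log_le_log (by positivity) (by push_cast at h2 ⊢; exact h2)
  have hbound : (Nat.log 2 q : ℝ) + 2 ≤ 2 * Real.log q := by
    have : (Nat.log 2 q : ℝ) ≤ Real.log q / Real.log 2 := by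
      rw [le_div_iff₀ (by linarith)]; exact hnatlog
    have h15 : Real.log q / Real.log 2 ≤ 1.5 * Real.log q := by
      rw [div_le_iff₀ (by linarith)]
      nlinarith
    nlinarith
  calc Real.log ((Nat.log 2 q : ℝ) + 2) ≤ Real.log (2 * Real.log q) := by
        apply Real.log_le_log (by positivity) hbound
    _ = Real.log 2 + Real.log (Real.log q) := Real.log_mul (by norm_num) (by linarith)
    _ ≤ Real.log (Real.log q) + 1 := by
        have := Real.log_two_lt_d9; linarith

lemma interval_sum (N₁ : ℕ) (hN₁ : ∀ n, N₁ ≤ n → 1/(6*Real.log (2*(n:ℝ))) ≤ ∑ p ∈ K n, (1:ℝ)/p) :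
    ∀ q : ℕ, max N₁ 100 ≤ q → ∀ x : ℝ, (q:ℝ) ≤ x →
    2 ≤ Real.log (Real.log x) - Real.log (Real.log q) →
    (Real.log (Real.log x) - Real.log (Real.log q)) / (12 * Real.log 2)
      ≤ ∑ p ∈ Finset.Ioc q ⌊x⌋₊, (if p.Prime then (1:ℝ)/p else 0) := by
  intro q hq x hqx hll
  have hq100 : 100 ≤ q := le_trans (le_max_right _ _) hq
  have hqN₁ : N₁ ≤ q := le_trans (le_max_left _ _) hq
  have hq0 : (0:ℝ) < q := by positivity
  have hx0 : (0:ℝ) < x := lt_of_lt_of_le hq0 hqx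
  have hlogq4 : (4:ℝ) ≤ Real.log q := log_nat_ge_four q hq100
  have hlogx4 : (4:ℝ) ≤ Real.log x := le_trans hlogq4 (Real.log_le_log hq0 hqx)
  have hllq : (1:ℝ) ≤ Real.log (Real.log q) := by
    calc (1:ℝ) = Real.log (Real.exp 1) := (Real.log_exp 1).symm
      _ ≤ Real.log (Real.log q) := by
          apply Real.log_le_log (Real.exp_pos 1)
          have := Real.exp_one_lt_d9
          linarith
  -- log x ≥ exp 2 * log q ≥ 7 * log q
  have hexp2 : (7:ℝ) ≤ Real.exp 2 := by
    have h := Real.exp_one_gt_d9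
    have : Real.exp 2 = (Real.exp 1)^2 := by
      rw [← Real.exp_nat_mul]; norm_num
    nlinarith [Real.exp_pos 1]
  have hlogx7 : 7 * Real.log q ≤ Real.log x := by
    have h1 : Real.log (Real.log q) + 2 ≤ Real.log (Real.log x) := by linarith
    have h2 : Real.exp (Real.log (Real.log q) + 2) ≤ Real.exp (Real.log (Real.log x)) :=
      Real.exp_le_exp.2 h1
    rw [Real.exp_add, Real.exp_log (by linarith), Real.exp_log (by linarith)] at h2
    nlinarith [hlogq4, hexp2]
  have h2qx : ((2*q : ℕ):ℝ) ≤ x := by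
    have hq2 : Real.log ((2*q:ℕ):ℝ) ≤ 2 * Real.log q := by
      have hle : ((2*q:ℕ):ℝ) ≤ (q:ℝ)^2 := by
        push_cast
        have : (100:ℝ) ≤ q := by exact_mod_cast hq100
        nlinarith
      calc Real.log ((2*q:ℕ):ℝ) ≤ Real.log ((q:ℝ)^2) := Real.log_le_log (by positivity) hle
        _ = 2 * Real.log q := by rw [Real.log_pow]; push_cast; ring
    have h3 : Real.log ((2*q:ℕ):ℝ) ≤ Real.log x := by linarith
    have := Real.exp_le_exp.2 h3
    rwa [Real.exp_log (by positivity), Real.exp_log hx0] at this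
  have hfloor2q : 2*q ≤ ⌊x⌋₊ := Nat.le_floor h2qx
  have hfloor0 : ⌊x⌋₊ ≠ 0 := by omega
  set a := Nat.log 2 q + 1 with ha_def
  set b := Nat.log 2 ⌊x⌋₊ with hb_def
  have hq_lt_pow : q < 2^a := Nat.lt_pow_succ_log_self (by norm_num) q
  have hpow_le : (2:ℕ)^a ≤ 2*q := by
    have := Nat.pow_log_le_self 2 (show q ≠ 0 by omega)
    calc (2:ℕ)^a = 2 * 2^(Nat.log 2 q) := by rw [ha_def]; ring
      _ ≤ 2*q := by omega
  have hab : a ≤ b := by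
    rw [hb_def, Nat.le_log_iff_pow_le (by norm_num) hfloor0]
    omega
  have haN₁ : N₁ ≤ 2^a := le_trans (le_trans hqN₁ hq_lt_pow.le) le_rfl
  have hpow_b : (2:ℕ)^b ≤ ⌊x⌋₊ := Nat.pow_log_le_self 2 hfloor0
  have hsubset : Finset.Ioc ((2:ℕ)^a) ((2:ℕ)^b) ⊆ Finset.Ioc q ⌊x⌋₊ := by
    intro p hp
    rw [Finset.mem_Ioc] at hp ⊢
    omega
  have hmono : ∑ p ∈ Finset.Ioc ((2:ℕ)^a) ((2:ℕ)^b), (if p.Prime then (1:ℝ)/p else 0)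
      ≤ ∑ p ∈ Finset.Ioc q ⌊x⌋₊, (if p.Prime then (1:ℝ)/p else 0) := by
    refine Finset.sum_le_sum_of_subset_of_nonneg hsubset fun i _ _ => ?_
    split <;> positivity
  have hdy := dyadic N₁ hN₁ a haN₁ b hab
  have hharm := harmonic_lower a b
  -- log (b+1) ≥ log log x
  have hb1 : Real.log (Real.log x) ≤ Real.log ((b:ℝ)+1) := by
    have h1 : ⌊x⌋₊ < 2^(b+1) := Nat.lt_pow_succ_log_self (by norm_num) _
    have h2 : x < ((2:ℕ)^(b+1) : ℝ) := by
      calc x < ⌊x⌋₊ + 1 := Nat.lt_floor_add_one x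
        _ ≤ ((2:ℕ)^(b+1) : ℝ) := by exact_mod_cast Nat.succ_le_of_lt h1
    have h3 : Real.log x ≤ (b+1) * Real.log 2 := by
      calc Real.log x ≤ Real.log (((2:ℕ)^(b+1)) : ℝ) := Real.log_le_log hx0 h2.le
        _ = (b+1) * Real.log 2 := by push_cast; rw [Real.log_pow]; push_cast; ring
    have hlog2 : Real.log 2 ≤ 1 := by
      have := Real.log_two_lt_d9; linarith
    have h4 : Real.log x ≤ (b:ℝ)+1 := by
      have hb0 : (0:ℝ) ≤ (b:ℝ)+1 := by positivity
      nlinarith [Real.log_nonneg (show (1:ℝ) ≤ 2 by norm_num)]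
    exact Real.log_le_log (by linarith) h4
  have ha1 : Real.log ((a:ℝ)+1) ≤ Real.log (Real.log q) + 1 := by
    have : ((a:ℝ)+1) = (Nat.log 2 q : ℝ) + 2 := by rw [ha_def]; push_cast; ring
    rw [this]
    exact log_log_le_add_one q hq100
  -- assemble
  have hl2 : (0:ℝ) < Real.log 2 := Real.log_pos (by norm_num)
  set D := Real.log (Real.log x) - Real.log (Real.log q) with hD
  have hchain : (1/(6*Real.log 2)) * (D - 1) ≤
      ∑ p ∈ Finset.Ioc q ⌊x⌋₊, (if p.Prime then (1:ℝ)/p else 0) := by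
    refine le_trans ?_ (le_trans hdy hmono)
    have hDle : D - 1 ≤ Real.log ((b:ℝ)+1) - Real.log ((a:ℝ)+1) := by
      rw [hD]; linarith
    have h6 : (0:ℝ) < 1/(6*Real.log 2) := by positivity
    calc (1/(6*Real.log 2)) * (D-1) ≤ (1/(6*Real.log 2)) * (Real.log ((b:ℝ)+1) - Real.log ((a:ℝ)+1)) :=
          mul_le_mul_of_nonneg_left hDle h6.le
      _ ≤ _ := mul_le_mul_of_nonneg_left hharm h6.le
  refine le_trans ?_ hchain
  rw [div_le_iff₀ (by positivity)]
  have : (1/(6*Real.log 2)) * (D-1) * (12 * Real.log 2) = 2*(D-1) := by field_simp; ring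
  rw [this]
  linarith




/-- target function -/
def g (x : ℝ) : ℝ := Real.log (Real.log x) / Real.log (Real.log (Real.log x))

open Classical in
/-- greedy partial sums -/
def S (N₀ : ℕ) : ℕ → ℝ
  | 0 => 0
  | (n+1) => S N₀ n + (if n.Prime ∧ N₀ ≤ n ∧ S N₀ n + 1/(n:ℝ) ≤ g n then 1/(n:ℝ) else 0)

/-- the greedy set of primes -/
def P (N₀ : ℕ) : Set ℕ := {n | n.Prime ∧ N₀ ≤ n ∧ S N₀ n + 1/(n:ℝ) ≤ g n}

lemma S_mono (N₀ : ℕ) : Monotone (S N₀) := by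
  refine monotone_nat_of_le_succ fun n => ?_
  rw [S]
  have : (0:ℝ) ≤ (if n.Prime ∧ N₀ ≤ n ∧ S N₀ n + 1/(n:ℝ) ≤ g n then 1/(n:ℝ) else 0) := by
    split <;> positivity
  linarith

lemma S_nonneg (N₀ n : ℕ) : 0 ≤ S N₀ n := by
  have := S_mono N₀ (Nat.zero_le n)
  simpa [S] using this

open Classical in
lemma S_eq_sum_indicator (N₀ n : ℕ) :
    S N₀ n = ∑ k ∈ Finset.range n, Set.indicator (P N₀) (fun p : ℕ => 1/(p:ℝ)) k := by
  induction n with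
  | zero => simp [S]
  | succ n ih =>
      rw [Finset.sum_range_succ, ← ih, S]
      congr 1
      by_cases hc : n ∈ P N₀
      · rw [Set.indicator_of_mem hc, if_pos (show n.Prime ∧ N₀ ≤ n ∧ S N₀ n + 1/(n:ℝ) ≤ g n from hc)]
      · rw [Set.indicator_of_notMem hc,
          if_neg (show ¬(n.Prime ∧ N₀ ≤ n ∧ S N₀ n + 1/(n:ℝ) ≤ g n) from hc)]

lemma S_zero_of_le (N₀ n : ℕ) (h : n ≤ N₀) : S N₀ n = 0 := by
  induction n with
  | zero => simp [S]
  | succ n ih =>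
      rw [S, ih (by omega), if_neg]
      · ring
      · rintro ⟨-, h2, -⟩; omega

open Classical in
lemma S_step_sum (N₀ : ℕ) : ∀ m n : ℕ, m ≤ n → S N₀ n = S N₀ m +
    ∑ k ∈ Finset.Ico m n, (if k.Prime ∧ N₀ ≤ k ∧ S N₀ k + 1/(k:ℝ) ≤ g k then 1/(k:ℝ) else 0) := by
  intro m n
  induction n with
  | zero => intro h; interval_cases m; simp [S]
  | succ n ih =>
      intro h
      rcases Nat.lt_or_ge m (n+1) with h1 | h1
      · have hm : m ≤ n := by omega
        rw [Finset.sum_Ico_succ_top hm, S, ih hm]; ring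
      · have : m = n+1 := by omega
        subst this; simp

lemma S_le_g (N₀ : ℕ) (hmono : ∀ x y : ℝ, (N₀:ℝ) ≤ x → x ≤ y → g x ≤ g y)
    (hg0 : 0 ≤ g N₀) : ∀ n : ℕ, N₀ ≤ n → S N₀ n ≤ g n := by
  intro n
  induction n with
  | zero => intro h; simp at h; subst h; simpa [S] using hg0
  | succ n ih =>
      intro h
      rcases Nat.lt_or_ge n N₀ with h1 | h1
      · have : n + 1 = N₀ := by omega
        rw [S_zero_of_le N₀ (n+1) (by omega)]
        rw [this]; exact hg0
      · have hgn : g n ≤ g (((n+1:ℕ)):ℝ) := by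
          apply hmono
          · exact_mod_cast h1
          · push_cast; linarith
        rw [S]
        split
        · next hcond => linarith [hcond.2.2]
        · linarith [ih h1]



lemma log_sub_log_le {a b : ℝ} (ha : 0 < a) (hab : a ≤ b) :
    Real.log b - Real.log a ≤ (b-a)/a := by
  rw [← Real.log_div (by linarith) (ne_of_gt ha)]
  have h1 := Real.log_le_sub_one_of_pos (div_pos (by linarith) ha)
  have h2 : b/a - 1 = (b-a)/a := by field_simp
  linarith

lemma div_log_mono {u v : ℝ} (hu : Real.exp 1 ≤ u) (huv : u ≤ v) :
    u / Real.log u ≤ v / Real.log v := by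
  have h := Real.log_div_self_antitoneOn (Set.mem_setOf_eq ▸ hu)
    (Set.mem_setOf_eq ▸ le_trans hu huv) huv
  have hu1 : (1:ℝ) ≤ Real.log u := by
    rw [show (1:ℝ) = Real.log (Real.exp 1) by rw [Real.log_exp]]
    exact Real.log_le_log (Real.exp_pos 1) hu
  have hv1 : (1:ℝ) ≤ Real.log v := by
    rw [show (1:ℝ) = Real.log (Real.exp 1) by rw [Real.log_exp]]
    exact Real.log_le_log (Real.exp_pos 1) (le_trans hu huv)
  have hu0 : (0:ℝ) < u := lt_of_lt_of_le (Real.exp_pos 1) hu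
  have hv0 : (0:ℝ) < v := lt_of_lt_of_le hu0 huv
  have h1 : (0:ℝ) < Real.log v / v := div_pos (by linarith) hv0
  have := inv_anti₀ h1 h
  rwa [inv_div, inv_div] at this

lemma div_log_diff {u v : ℝ} (hu : Real.exp 1 ≤ u) (huv : u ≤ v) :
    v / Real.log v - u / Real.log u ≤ (v - u)/Real.log u := by
  have hu1 : (1:ℝ) ≤ Real.log u := by
    rw [show (1:ℝ) = Real.log (Real.exp 1) by rw [Real.log_exp]]
    exact Real.log_le_log (Real.exp_pos 1) hu
  have hv1 : Real.log u ≤ Real.log v :=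
    Real.log_le_log (lt_of_lt_of_le (Real.exp_pos 1) hu) huv
  have hv0 : (0:ℝ) ≤ v := le_trans (le_trans (Real.exp_pos 1).le hu) huv
  have h1 : v / Real.log v ≤ v / Real.log u := by
    apply div_le_div_of_nonneg_left hv0 (by linarith) hv1
  have h2 : v / Real.log u - u / Real.log u = (v-u)/Real.log u := by ring
  linarith

/-- the big threshold -/
noncomputable def X₀ : ℝ := Real.exp (Real.exp (Real.exp 17))

lemma X₀_pos : (0:ℝ) < X₀ := Real.exp_pos _

lemma facts {x : ℝ} (hx : X₀ ≤ x) :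
    Real.exp (Real.exp 17) ≤ Real.log x ∧ Real.exp 17 ≤ Real.log (Real.log x) ∧
      (17:ℝ) ≤ Real.log (Real.log (Real.log x)) := by
  have h0 : (0:ℝ) < x := lt_of_lt_of_le X₀_pos hx
  have h1 : Real.exp (Real.exp 17) ≤ Real.log x := by
    calc Real.exp (Real.exp 17) = Real.log X₀ := by rw [X₀, Real.log_exp]
      _ ≤ Real.log x := Real.log_le_log X₀_pos hx
  have h2 : Real.exp 17 ≤ Real.log (Real.log x) := by
    calc Real.exp 17 = Real.log (Real.exp (Real.exp 17)) := by rw [Real.log_exp]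
      _ ≤ _ := Real.log_le_log (Real.exp_pos _) h1
  have h3 : (17:ℝ) ≤ Real.log (Real.log (Real.log x)) := by
    calc (17:ℝ) = Real.log (Real.exp 17) := by rw [Real.log_exp]
      _ ≤ _ := Real.log_le_log (Real.exp_pos _) h2
  exact ⟨h1, h2, h3⟩

lemma exp_one_le_exp_17 : Real.exp 1 ≤ Real.exp 17 := Real.exp_le_exp.2 (by norm_num)

lemma g_mono' {x y : ℝ} (hx : X₀ ≤ x) (hxy : x ≤ y) : g x ≤ g y := by
  obtain ⟨h1, h2, h3⟩ := facts hx
  have h0 : (0:ℝ) < x := lt_of_lt_of_le X₀_pos hx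
  have hll : Real.log (Real.log x) ≤ Real.log (Real.log y) := by
    apply Real.log_le_log (by linarith [Real.exp_pos (Real.exp 17)])
    exact Real.log_le_log h0 hxy
  exact div_log_mono (le_trans exp_one_le_exp_17 h2) hll

lemma g_diff {x y : ℝ} (hx : X₀ ≤ x) (hxy : x ≤ y) :
    g y - g x ≤ (Real.log (Real.log y) - Real.log (Real.log x)) /
      Real.log (Real.log (Real.log x)) := by
  obtain ⟨h1, h2, h3⟩ := facts hx
  have h0 : (0:ℝ) < x := lt_of_lt_of_le X₀_pos hx
  have hll : Real.log (Real.log x) ≤ Real.log (Real.log y) := by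
    apply Real.log_le_log (by linarith [Real.exp_pos (Real.exp 17)])
    exact Real.log_le_log h0 hxy
  exact div_log_diff (le_trans exp_one_le_exp_17 h2) hll

lemma ll_diff {x y : ℝ} (hx : X₀ ≤ x) (hxy : x ≤ y) :
    Real.log (Real.log y) - Real.log (Real.log x) ≤ (y - x)/x := by
  obtain ⟨h1, h2, h3⟩ := facts hx
  have h0 : (0:ℝ) < x := lt_of_lt_of_le X₀_pos hx
  have hlx1 : (1:ℝ) ≤ Real.log x := by linarith [Real.exp_pos (Real.exp 17),
    (Real.add_one_le_exp (Real.exp 17)), Real.exp_pos 17]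
  have h4 : Real.log (Real.log y) - Real.log (Real.log x)
      ≤ (Real.log y - Real.log x)/Real.log x :=
    log_sub_log_le (by linarith) (Real.log_le_log h0 hxy)
  have h5 : Real.log y - Real.log x ≤ (y-x)/x := log_sub_log_le h0 hxy
  have h6 : (Real.log y - Real.log x)/Real.log x ≤ Real.log y - Real.log x := by
    rw [div_le_iff₀ (by linarith)]
    nlinarith [Real.log_le_log h0 hxy]
  linarith

lemma g_nonneg {x : ℝ} (hx : X₀ ≤ x) : 0 ≤ g x := by
  obtain ⟨h1, h2, h3⟩ := facts hx
  have he := Real.exp_pos 17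
  rw [g]
  apply div_nonneg <;> linarith

lemma g_le {x : ℝ} (hx : X₀ ≤ x) : g x ≤ Real.log (Real.log x) / 17 := by
  obtain ⟨h1, h2, h3⟩ := facts hx
  have h0 : (0:ℝ) < Real.log (Real.log x) := lt_of_lt_of_le (Real.exp_pos 17) h2
  rw [g]
  apply div_le_div_of_nonneg_left h0.le (by norm_num) h3

lemma g_ge_sqrt {x : ℝ} (hx : X₀ ≤ x) : Real.sqrt (Real.log (Real.log x)) / 2 ≤ g x := by
  obtain ⟨h1, h2, h3⟩ := facts hx
  set u := Real.log (Real.log x) with hu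
  have hu0 : (0:ℝ) < u := lt_of_lt_of_le (Real.exp_pos 17) h2
  have hlog : Real.log u ≤ 2 * Real.sqrt u := by
    have hs := Real.log_le_sub_one_of_pos (Real.sqrt_pos.2 hu0)
    have : Real.log (Real.sqrt u) = Real.log u / 2 := Real.log_sqrt hu0.le
    nlinarith [Real.sqrt_nonneg u]
  have hlogu : (0:ℝ) < Real.log u := by
    have : (17:ℝ) ≤ Real.log u := h3
    linarith
  rw [g, ← hu]
  rw [div_le_div_iff₀ (by norm_num) hlogu]
  have hsq : Real.sqrt u * Real.sqrt u = u := Real.mul_self_sqrt hu0.le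
  nlinarith [Real.sqrt_nonneg u, hlog, hsq]




lemma le_ll {T x : ℝ} (hx : Real.exp (Real.exp T) ≤ x) : T ≤ Real.log (Real.log x) := by
  have h1 : Real.exp T ≤ Real.log x := by
    calc Real.exp T = Real.log (Real.exp (Real.exp T)) := by rw [Real.log_exp]
      _ ≤ Real.log x := Real.log_le_log (Real.exp_pos _) hx
  calc T = Real.log (Real.exp T) := by rw [Real.log_exp]
    _ ≤ _ := Real.log_le_log (Real.exp_pos _) h1

lemma le_lll {T x : ℝ} (hx : Real.exp (Real.exp (Real.exp T)) ≤ x) :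
    T ≤ Real.log (Real.log (Real.log x)) := by
  have h1 : Real.exp (Real.exp T) ≤ Real.log x := by
    calc Real.exp (Real.exp T) = Real.log (Real.exp (Real.exp (Real.exp T))) := by
          rw [Real.log_exp]
      _ ≤ Real.log x := Real.log_le_log (Real.exp_pos _) hx
  exact le_ll h1

lemma exists_ll_large (N : ℕ) (T : ℝ) :
    ∃ n : ℕ, N ≤ n ∧ T ≤ Real.log (Real.log (n:ℝ)) := by
  refine ⟨max N (⌈Real.exp (Real.exp T)⌉₊ + 1), le_max_left _ _, ?_⟩
  apply le_ll
  calc Real.exp (Real.exp T) ≤ (⌈Real.exp (Real.exp T)⌉₊ : ℝ) := Nat.le_ceil _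
    _ ≤ ((max N (⌈Real.exp (Real.exp T)⌉₊ + 1) : ℕ) : ℝ) := by
        exact_mod_cast le_trans (by omega) (le_max_right N (⌈Real.exp (Real.exp T)⌉₊ + 1))

lemma g_tendsto : Tendsto g atTop atTop := by
  rw [tendsto_atTop]
  intro C
  rcases le_or_gt C 0 with hC | hC
  · filter_upwards [eventually_ge_atTop X₀] with x hx
    linarith [g_nonneg hx]
  · have h4C : (0:ℝ) < 4*C^2 := by positivity
    filter_upwards [eventually_ge_atTop (max X₀ (Real.exp (Real.exp (4*C^2))))] with x hx
    have hx1 : X₀ ≤ x := le_trans (le_max_left _ _) hx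
    have hx2 : Real.exp (Real.exp (4*C^2)) ≤ x := le_trans (le_max_right _ _) hx
    have hll : 4*C^2 ≤ Real.log (Real.log x) := le_ll hx2
    have hsqrt : 2*C ≤ Real.sqrt (Real.log (Real.log x)) := by
      rw [show (2*C) = Real.sqrt ((2*C)^2) by
        rw [Real.sqrt_sq (by positivity)]]
      apply Real.sqrt_le_sqrt
      nlinarith
    linarith [g_ge_sqrt hx1]


end
end Rem22

open Finset Filter Real

noncomputable section

def primesLe (x : ℝ) : Finset ℕ := (Finset.Iic ⌊x⌋₊).filter Nat.Prime

set_option maxHeartbeats 1000000 in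
/-- Remark 2.2: there is an infinite set `P` of primes, all `≥ 17`, with
`∑_{p ∈ P, p ≤ x} 1/p = (log log x)/(log log log x) + o(1)`. -/
theorem exists_prime_set_with_partial_sums :
    ∃ P : Set ℕ, P.Infinite ∧ (∀ p ∈ P, Nat.Prime p ∧ 17 ≤ p) ∧
      Tendsto (fun x : ℝ =>
          (∑ p ∈ primesLe x, Set.indicator P (fun p : ℕ => 1 / (p : ℝ)) p) -
            Real.log (Real.log x) / Real.log (Real.log (Real.log x)))
        atTop (nhds 0) := by
  classical
  obtain ⟨N₁, hN₁⟩ := eventually_atTop.1 Rem22.sum_K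
  have hM := Rem22.interval_sum N₁ hN₁
  set N₀ : ℕ := max (max N₁ 100) (⌈Rem22.X₀⌉₊ + 17) with hN₀_def
  have hN₀X : Rem22.X₀ ≤ (N₀:ℝ) := by
    calc Rem22.X₀ ≤ (⌈Rem22.X₀⌉₊ : ℝ) := Nat.le_ceil _
      _ ≤ ((⌈Rem22.X₀⌉₊ + 17 : ℕ) : ℝ) := by push_cast; linarith
      _ ≤ (N₀:ℝ) := by exact_mod_cast le_max_right _ _
  have hN₀17 : 17 ≤ N₀ := le_trans (by omega) (le_max_right (max N₁ 100) (⌈Rem22.X₀⌉₊ + 17))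
  have hN₀M : max N₁ 100 ≤ N₀ := le_max_left _ _
  have hNatX : ∀ n : ℕ, N₀ ≤ n → Rem22.X₀ ≤ (n:ℝ) := fun n hn =>
    le_trans hN₀X (by exact_mod_cast hn)
  have hmono : ∀ x y : ℝ, (N₀:ℝ) ≤ x → x ≤ y → Rem22.g x ≤ Rem22.g y :=
    fun x y hx hxy => Rem22.g_mono' (le_trans hN₀X hx) hxy
  have hg0 : 0 ≤ Rem22.g N₀ := Rem22.g_nonneg hN₀X
  have hSle := Rem22.S_le_g N₀ hmono hg0
  -- the partial sums equal `S (⌊x⌋+1)`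
  have hF : ∀ x : ℝ, (∑ p ∈ primesLe x, Set.indicator (Rem22.P N₀) (fun p : ℕ => 1/(p:ℝ)) p)
      = Rem22.S N₀ (⌊x⌋₊ + 1) := by
    intro x
    rw [Rem22.S_eq_sum_indicator]
    have hrange : Finset.range (⌊x⌋₊ + 1) = Finset.Iic ⌊x⌋₊ := by
      ext k; simp [Nat.lt_succ_iff]
    rw [hrange, primesLe]
    refine Finset.sum_filter_of_ne ?_
    intro p _ hne
    have hmem : p ∈ Rem22.P N₀ := by
      by_contra hmem
      rw [Set.indicator_of_notMem hmem] at hne; exact hne rfl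
    exact hmem.1
  -- there are arbitrarily large "excluded" primes
  have hexcl : ∀ m : ℕ, ∃ q : ℕ, m ≤ q ∧ q.Prime ∧ N₀ ≤ q ∧
      Rem22.g q < Rem22.S N₀ q + 1/(q:ℝ) := by
    intro m
    by_contra hcon
    push_neg at hcon
    set m₂ : ℕ := max m N₀ with hm₂def
    have hm₂N₀ : N₀ ≤ m₂ := le_max_right _ _
    have hm₂X : Rem22.X₀ ≤ (m₂:ℝ) := hNatX m₂ hm₂N₀
    obtain ⟨n, hn1, hn2⟩ := Rem22.exists_ll_large m₂
      (max ((17 * Real.log (Real.log (m₂:ℝ)) + 9)/8 + 1) (Real.log (Real.log (m₂:ℝ)) + 2))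
    set A := Real.log (Real.log (m₂:ℝ)) with hA
    set B := Real.log (Real.log (n:ℝ)) with hB
    have hB1 : (17*A+9)/8 + 1 ≤ B := le_trans (le_max_left _ _) hn2
    have hB2 : A + 2 ≤ B := le_trans (le_max_right _ _) hn2
    have hMn := hM m₂ (le_trans hN₀M hm₂N₀) (n:ℝ) (by exact_mod_cast hn1) (by rw [← hA, ← hB]; linarith)
    rw [Nat.floor_natCast] at hMn
    have hstep := Rem22.S_step_sum N₀ (m₂+1) (n+1) (by omega)
    have hS1 : (0:ℝ) ≤ Rem22.S N₀ (m₂+1) := Rem22.S_nonneg _ _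
    have hIco : Finset.Ico (m₂+1) (n+1) = Finset.Ioc m₂ n := by
      ext k; simp only [Finset.mem_Ico, Finset.mem_Ioc]; omega
    have hterm : ∑ k ∈ Finset.Ioc m₂ n, (if k.Prime then (1:ℝ)/k else 0)
        ≤ ∑ k ∈ Finset.Ioc m₂ n,
          (if k.Prime ∧ N₀ ≤ k ∧ Rem22.S N₀ k + 1/(k:ℝ) ≤ Rem22.g k then 1/(k:ℝ) else 0) := by
      refine Finset.sum_le_sum fun k hk => ?_
      rw [Finset.mem_Ioc] at hk
      by_cases hkp : k.Prime
      · rw [if_pos hkp, if_pos ⟨hkp, by omega, hcon k (by omega) hkp (by omega)⟩]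
      · rw [if_neg hkp, if_neg (fun hc => hkp hc.1)]
    have hSn : (B - A)/(12*Real.log 2) ≤ Rem22.S N₀ (n+1) := by
      calc (B-A)/(12*Real.log 2) ≤ _ := hMn
        _ ≤ _ := hterm
        _ ≤ Rem22.S N₀ (m₂+1) + _ := by linarith
        _ = Rem22.S N₀ (n+1) := by rw [hstep, hIco]
    have hnN₀ : N₀ ≤ n := le_trans hm₂N₀ hn1
    have hle_g := hSle (n+1) (by omega)
    have hn1X : Rem22.X₀ ≤ ((n+1:ℕ):ℝ) := hNatX (n+1) (by omega)
    have hgle := Rem22.g_le hn1X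
    have hll1 : Real.log (Real.log ((n+1:ℕ):ℝ)) ≤ B + 1 := by
      have hnX : Rem22.X₀ ≤ (n:ℝ) := hNatX n hnN₀
      have h := Rem22.ll_diff hnX (show (n:ℝ) ≤ ((n+1:ℕ):ℝ) by push_cast; linarith)
      have hn0 : (1:ℝ) ≤ (n:ℝ) := by
        have : 1 ≤ n := by omega
        exact_mod_cast this
      have h2 : (((n+1:ℕ):ℝ) - (n:ℝ))/(n:ℝ) ≤ 1 := by
        push_cast
        rw [div_le_one (by linarith)]; linarith
      rw [hB]; linarith
    have hlog2 : Real.log 2 < 0.6931471808 := Real.log_two_lt_d9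
    have hlog2' : (0:ℝ) < Real.log 2 := Real.log_pos one_lt_two
    have h9 : (B-A)/9 ≤ (B-A)/(12*Real.log 2) := by
      apply div_le_div_of_nonneg_left (by linarith) (by linarith) (by nlinarith)
    have hfin : (B-A)/9 ≤ (B+1)/17 := by
      calc (B-A)/9 ≤ (B-A)/(12*Real.log 2) := h9
        _ ≤ Rem22.S N₀ (n+1) := hSn
        _ ≤ Rem22.g ((n+1:ℕ):ℝ) := hle_g
        _ ≤ Real.log (Real.log ((n+1:ℕ):ℝ))/17 := hgle
        _ ≤ (B+1)/17 := by linarith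
    nlinarith [hB1, hfin]
  -- the main limit statement
  have key : Tendsto (fun x : ℝ => Rem22.S N₀ (⌊x⌋₊ + 1) - Rem22.g x) atTop (nhds 0) := by
    rw [Metric.tendsto_nhds]
    intro ε hε
    set m : ℕ := max N₀ (max (⌈Real.exp (Real.exp (Real.exp (8/ε)))⌉₊ + 1) (⌈(4:ℝ)/ε⌉₊ + 1))
      with hmdef
    obtain ⟨q₀, hq₀m, hq₀p, hq₀N₀, hq₀ex⟩ := hexcl m
    rw [eventually_atTop]
    refine ⟨max ((q₀:ℝ)+1) (max ((N₀:ℝ)+1) (2/ε + 1)), fun x hx => ?_⟩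
    have hx1 : (q₀:ℝ)+1 ≤ x := le_trans (le_max_left _ _) hx
    have hx2 : (N₀:ℝ)+1 ≤ x := le_trans (le_trans (le_max_left _ _) (le_max_right _ _)) hx
    have hx3 : 2/ε + 1 ≤ x := le_trans (le_trans (le_max_right _ _) (le_max_right _ _)) hx
    have hxN₀ : (N₀:ℝ) ≤ x := by linarith
    have hx0 : (0:ℝ) < x := by
      have : (0:ℝ) < (N₀:ℝ) := by
        have : 0 < N₀ := by omega
        exact_mod_cast this
      linarith
    have hxX : Rem22.X₀ ≤ x := le_trans hN₀X hxN₀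
    have hfloorN₀ : N₀ ≤ ⌊x⌋₊ := Nat.le_floor (by exact_mod_cast hxN₀)
    -- upper bound
    have hUp : Rem22.S N₀ (⌊x⌋₊ + 1) - Rem22.g x ≤ ε/2 := by
      set y : ℝ := ((⌊x⌋₊ + 1 : ℕ):ℝ) with hy
      have hxy : x ≤ y := by
        rw [hy]; push_cast
        exact (Nat.lt_floor_add_one x).le
      have hyx : y - x ≤ 1 := by
        rw [hy]; push_cast
        linarith [Nat.floor_le hx0.le]
      have hS_g : Rem22.S N₀ (⌊x⌋₊ + 1) ≤ Rem22.g y := hSle (⌊x⌋₊ + 1) (by omega)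
      have hdiff : Rem22.g y - Rem22.g x ≤
          (Real.log (Real.log y) - Real.log (Real.log x)) /
            Real.log (Real.log (Real.log x)) := Rem22.g_diff hxX hxy
      obtain ⟨hf1, hf2, hf3⟩ := Rem22.facts hxX
      have hll_nonneg : 0 ≤ Real.log (Real.log y) - Real.log (Real.log x) := by
        have h1 : Real.log x ≤ Real.log y := Real.log_le_log hx0 hxy
        have h2 : (0:ℝ) < Real.log x := by nlinarith [Real.exp_pos (Real.exp 17)]
        have := Real.log_le_log h2 h1
        linarith
      have hdd : (Real.log (Real.log y) - Real.log (Real.log x)) /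
            Real.log (Real.log (Real.log x)) ≤
          Real.log (Real.log y) - Real.log (Real.log x) :=
        div_le_self hll_nonneg (by linarith)
      have hll_le := Rem22.ll_diff hxX hxy
      have h1x : (y-x)/x ≤ 1/x := by
        rw [div_le_div_iff₀ hx0 hx0]
        nlinarith
      have h1xε : 1/x ≤ ε/2 := by
        have h2x : 2/ε ≤ x := by linarith
        have hm := mul_le_mul_of_nonneg_left h2x hε.le
        have hfs : ε*(2/ε) = 2 := by field_simp
        rw [div_le_div_iff₀ hx0 (by norm_num : (0:ℝ)<2)]
        nlinarith
      linarith
    -- lower bound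
    have hLow : Rem22.g x - Rem22.S N₀ (⌊x⌋₊ + 1) ≤ ε/2 := by
      have hmc1 : (⌈Real.exp (Real.exp (Real.exp (8/ε)))⌉₊ + 1 : ℕ) ≤ m :=
        le_trans (le_max_left _ _) (le_max_right _ _)
      have hmc2 : (⌈(4:ℝ)/ε⌉₊ + 1 : ℕ) ≤ m := le_trans (le_max_right _ _) (le_max_right _ _)
      set E := (Finset.Iic ⌊x⌋₊).filter
        (fun k => k.Prime ∧ N₀ ≤ k ∧ Rem22.g k < Rem22.S N₀ k + 1/(k:ℝ)) with hE
      have hq₀floor : q₀ ≤ ⌊x⌋₊ := Nat.le_floor (by push_cast; linarith)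
      have hq₀E : q₀ ∈ E :=
        Finset.mem_filter.2 ⟨Finset.mem_Iic.2 hq₀floor, hq₀p, hq₀N₀, hq₀ex⟩
      have hne : E.Nonempty := ⟨q₀, hq₀E⟩
      set q' := E.max' hne with hq'def
      have hq'mem := Finset.mem_filter.1 (E.max'_mem hne)
      have hq'floor : q' ≤ ⌊x⌋₊ := Finset.mem_Iic.1 hq'mem.1
      obtain ⟨hq'p, hq'N₀, hq'ex⟩ := hq'mem.2
      have hq'ge : q₀ ≤ q' := Finset.le_max' E q₀ hq₀E
      have hq'm : m ≤ q' := le_trans hq₀m hq'ge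
      have hq'X : Rem22.X₀ ≤ (q':ℝ) := hNatX q' hq'N₀
      have hq'pos : (0:ℝ) < q' := lt_of_lt_of_le Rem22.X₀_pos hq'X
      have hq'x : (q':ℝ) ≤ x := by
        calc (q':ℝ) ≤ (⌊x⌋₊:ℝ) := by exact_mod_cast hq'floor
          _ ≤ x := Nat.floor_le hx0.le
      have hq'41 : (4:ℝ)/ε ≤ (q':ℝ) := by
        calc (4:ℝ)/ε ≤ (⌈(4:ℝ)/ε⌉₊ : ℝ) := Nat.le_ceil _
          _ ≤ (q':ℝ) := by exact_mod_cast le_trans (by omega) hq'm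
      have hq'ε : 1/(q':ℝ) ≤ ε/4 := by
        have hm2 := mul_le_mul_of_nonneg_left hq'41 hε.le
        have hfs : ε*((4:ℝ)/ε) = 4 := by field_simp
        rw [div_le_div_iff₀ hq'pos (by norm_num : (0:ℝ)<4)]
        nlinarith
      have hq'lll : 8/ε ≤ Real.log (Real.log (Real.log (q':ℝ))) := by
        apply Rem22.le_lll
        calc Real.exp (Real.exp (Real.exp (8/ε)))
            ≤ (⌈Real.exp (Real.exp (Real.exp (8/ε)))⌉₊:ℝ) := Nat.le_ceil _
          _ ≤ (q':ℝ) := by exact_mod_cast le_trans (by omega) hq'm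
      have hSq' : Rem22.S N₀ (q'+1) = Rem22.S N₀ q' := by
        rw [Rem22.S, if_neg (fun hc => absurd hc.2.2 (not_le.2 hq'ex))]
        ring
      have hstep := Rem22.S_step_sum N₀ (q'+1) (⌊x⌋₊+1) (by omega)
      have hIco : Finset.Ico (q'+1) (⌊x⌋₊+1) = Finset.Ioc q' ⌊x⌋₊ := by
        ext k; simp only [Finset.mem_Ico, Finset.mem_Ioc]; omega
      have hterm : ∑ k ∈ Finset.Ioc q' ⌊x⌋₊, (if k.Prime then (1:ℝ)/k else 0)
          ≤ ∑ k ∈ Finset.Ioc q' ⌊x⌋₊,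
            (if k.Prime ∧ N₀ ≤ k ∧ Rem22.S N₀ k + 1/(k:ℝ) ≤ Rem22.g k then 1/(k:ℝ) else 0) := by
        refine Finset.sum_le_sum fun k hk => ?_
        rw [Finset.mem_Ioc] at hk
        by_cases hkp : k.Prime
        · have hk3 : Rem22.S N₀ k + 1/(k:ℝ) ≤ Rem22.g k := by
            by_contra hneg
            have hkE : k ∈ E :=
              Finset.mem_filter.2 ⟨Finset.mem_Iic.2 hk.2, hkp, by omega, not_le.1 hneg⟩
            have := Finset.le_max' E k hkE
            omega
          rw [if_pos hkp, if_pos ⟨hkp, by omega, hk3⟩]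
        · rw [if_neg hkp, if_neg (fun hc => hkp hc.1)]
      have hFlow : Rem22.S N₀ q' + ∑ k ∈ Finset.Ioc q' ⌊x⌋₊, (if k.Prime then (1:ℝ)/k else 0)
          ≤ Rem22.S N₀ (⌊x⌋₊ + 1) := by
        rw [hstep, hIco, hSq']
        linarith
      have hgq' : Rem22.g (q':ℝ) < Rem22.S N₀ q' + 1/(q':ℝ) := hq'ex
      have hgd : Rem22.g x - Rem22.g (q':ℝ) ≤
          (Real.log (Real.log x) - Real.log (Real.log (q':ℝ))) /
            Real.log (Real.log (Real.log (q':ℝ))) := Rem22.g_diff hq'X hq'x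
      obtain ⟨hf1, hf2, hf3⟩ := Rem22.facts hq'X
      have hlll_pos : (0:ℝ) < Real.log (Real.log (Real.log (q':ℝ))) := by linarith
      have hsum_nonneg : (0:ℝ) ≤ ∑ k ∈ Finset.Ioc q' ⌊x⌋₊, (if k.Prime then (1:ℝ)/k else 0) := by
        apply Finset.sum_nonneg
        intro i _
        split <;> positivity
      rcases le_or_gt (Real.log (Real.log x) - Real.log (Real.log (q':ℝ))) 2 with hD2 | hD2
      · have hε8 : (0:ℝ) < 8/ε := by positivity
        have h2l : (Real.log (Real.log x) - Real.log (Real.log (q':ℝ))) /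
            Real.log (Real.log (Real.log (q':ℝ))) ≤ 2/(8/ε) :=
          div_le_div₀ (by norm_num) hD2 hε8 hq'lll
        have h2e : (2:ℝ)/(8/ε) = ε/4 := by
          field_simp
          ring
        linarith
      · have hMx := hM q' (le_trans hN₀M hq'N₀) x hq'x hD2.le
        have hlog2 := Real.log_two_lt_d9
        have hlog2' : (0:ℝ) < Real.log 2 := Real.log_pos one_lt_two
        have h1217 : 12*Real.log 2 ≤ Real.log (Real.log (Real.log (q':ℝ))) := by linarith
        have hdd : (Real.log (Real.log x) - Real.log (Real.log (q':ℝ))) /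
              Real.log (Real.log (Real.log (q':ℝ)))
            ≤ (Real.log (Real.log x) - Real.log (Real.log (q':ℝ))) / (12*Real.log 2) :=
          div_le_div_of_nonneg_left (by linarith) (by linarith) h1217
        linarith
    rw [Real.dist_0_eq_abs, abs_lt]
    constructor <;> linarith
  refine ⟨Rem22.P N₀, ?_, ?_, ?_⟩
  · by_contra hfin
    rw [Set.not_infinite] at hfin
    set C := ∑ p ∈ hfin.toFinset, (1:ℝ)/p with hC
    have hbound : ∀ n : ℕ, Rem22.S N₀ n ≤ C := by
      intro n
      rw [Rem22.S_eq_sum_indicator]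
      have h1 : ∑ k ∈ Finset.range n, Set.indicator (Rem22.P N₀) (fun p : ℕ => 1/(p:ℝ)) k
          = ∑ k ∈ (Finset.range n).filter (· ∈ Rem22.P N₀),
              Set.indicator (Rem22.P N₀) (fun p : ℕ => 1/(p:ℝ)) k :=
        (Finset.sum_filter_of_ne (fun k _ hne => by
          by_contra hmem
          rw [Set.indicator_of_notMem hmem] at hne
          exact hne rfl)).symm
      rw [h1]
      have h2 : ∀ k ∈ (Finset.range n).filter (· ∈ Rem22.P N₀),
          Set.indicator (Rem22.P N₀) (fun p : ℕ => 1/(p:ℝ)) k = 1/(k:ℝ) := by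
        intro k hk
        rw [Set.indicator_of_mem (Finset.mem_filter.1 hk).2]
      rw [Finset.sum_congr rfl h2, hC]
      apply Finset.sum_le_sum_of_subset_of_nonneg
      · intro k hk
        rw [Set.Finite.mem_toFinset]
        exact (Finset.mem_filter.1 hk).2
      · intro i _ _
        positivity
    have hFtop : Tendsto (fun x:ℝ => Rem22.S N₀ (⌊x⌋₊ + 1)) atTop atTop := by
      have hev : ∀ᶠ x:ℝ in atTop, Rem22.g x - 1 ≤ Rem22.S N₀ (⌊x⌋₊+1) := by
        have hkey := key
        rw [Metric.tendsto_nhds] at hkey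
        filter_upwards [hkey 1 one_pos] with x hx
        rw [Real.dist_0_eq_abs, abs_lt] at hx
        linarith [hx.1]
      have hg1 : Tendsto (fun x:ℝ => Rem22.g x - 1) atTop atTop := by
        simpa [sub_eq_add_neg] using tendsto_atTop_add_const_right atTop (-1 : ℝ) Rem22.g_tendsto
      exact tendsto_atTop_mono' atTop hev hg1
    obtain ⟨x, hx⟩ := (hFtop.eventually_ge_atTop (C+1)).exists
    linarith [hbound (⌊x⌋₊ + 1)]
  · rintro p ⟨hp, hpN₀, -⟩
    exact ⟨hp, le_trans hN₀17 hpN₀⟩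
  · have heq : (fun x : ℝ =>
        (∑ p ∈ primesLe x, Set.indicator (Rem22.P N₀) (fun p : ℕ => 1 / (p:ℝ)) p) -
          Real.log (Real.log x) / Real.log (Real.log (Real.log x)))
        = fun x : ℝ => Rem22.S N₀ (⌊x⌋₊ + 1) - Rem22.g x := by
      funext x
      rw [hF x]
      rfl
    rw [heq]
    exact key

end
end
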